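/- (Relations between dual variables of the subproblems — Theorem 3 of the paper.) If (x_{t,i}, u_{t,i}, x̄_i, d̄_i) is an optimal solution of the extended split MPC problem, then there exist Lagrange multipliers λ_{0,i} (for x_{0,i} = x̄_i), λ_{t+1,i} (for each dynamics constraint), λ_{tc,i} (for each terminal constraint, i < p), λ̂_{−1} (for x̄_0 = x̄) and λ̂_i, i = 0,…,p−1 (for each coupling constraint), which satisfy the stage stationarity conditions H_{x,t,i}x_{t,i} + H_{xu,t,i}u_{t,i} + f_{x,t,i} − λ_{t,i} + A_{t,i}ᵀλ_{t+1,i} = 0 and H_{xu,t,i}ᵀx_{t,i} + H_{u,t,i}u_{t,i} + f_{u,t,i} + B_{t,i}ᵀλ_{t+1,i} = 0 for all stages, together with H_{N_p,p}x_{N_p,p} + f_{N_p,p} − λ_{N_p,p} = 0, and which moreover satisfy: λ_{0,p} = λ̂_{p−1}; λ_{0,i} = λ̂_{i−1} − A_{c,i}ᵀ(λ_{tc,i} + λ̂_i) for i = 0,…,p−1; T_{c,i}ᵀ(λ_{tc,i} + λ̂_i) = 0 for i = 0,…,p−1; and λ_{N_i,i} = −λ_{tc,i} for i = 0,…,p−1.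 -/

import Mathlib

/-!
The feasible set is a fiber `{z | C z = C z₀}` of the linear map `C` sending the variables to the
linear parts of all constraints, and the cost is quadratic along lines:
`f (z + ε • d) = f z + ε * ∇f(z) d + ε ^ 2 * q`. At a minimizer, `ε ↦ ε * ∇f(z) d + ε ^ 2 * q` is
minimal at `ε = 0` for every `d ∈ ker C`, so `∇f(z)` vanishes on `ker C` and hence factors as
`ψ ∘ C` for a linear functional `ψ` on the constraint space. The multipliers are the components of
`ψ`, and each claimed relation is `∇f(z) = ψ ∘ C` tested on a unit direction in one block of
variables: a state `x_{t,i}`, a control `u_{t,i}`, a node `x̄_i` or a parameter `d̄_i`.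
-/

open Matrix Finset

section SplitMPC

variable (p nx : ℕ) (Ni : ℕ → ℕ) (nu nd : ℕ → ℕ)
  (Hx : ℕ → ℕ → Matrix (Fin nx) (Fin nx) ℝ)
  (Hxu : (i : ℕ) → ℕ → Matrix (Fin nx) (Fin (nu i)) ℝ)
  (Hu : (i : ℕ) → ℕ → Matrix (Fin (nu i)) (Fin (nu i)) ℝ)
  (fx : ℕ → ℕ → Fin nx → ℝ)
  (fu : (i : ℕ) → ℕ → Fin (nu i) → ℝ)
  (A : ℕ → ℕ → Matrix (Fin nx) (Fin nx) ℝ)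
  (B : (i : ℕ) → ℕ → Matrix (Fin nx) (Fin (nu i)) ℝ)
  (a : ℕ → ℕ → Fin nx → ℝ)
  (HNp : Matrix (Fin nx) (Fin nx) ℝ) (fNp : Fin nx → ℝ)
  (Ac : ℕ → Matrix (Fin nx) (Fin nx) ℝ)
  (Tc : (i : ℕ) → Matrix (Fin nx) (Fin (nd i)) ℝ)
  (ac : ℕ → Fin nx → ℝ)
  (xbarInit : Fin nx → ℝ)

/-- Feasibility for the extended split MPC problem: initial condition on `x̄_0`,
initial constraints `x_{0,i} = x̄_i`, segment dynamics, terminal constraints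
`x_{N_i,i} = A_{c,i} x̄_i + T_{c,i} d̄_i + a_{c,i}` (for `i < p`), and the coupling
constraints `x̄_{i+1} = A_{c,i} x̄_i + T_{c,i} d̄_i + a_{c,i}`. -/
def SplitFeasible (x : ℕ → ℕ → Fin nx → ℝ) (u : (i : ℕ) → ℕ → Fin (nu i) → ℝ)
    (xb : ℕ → Fin nx → ℝ) (db : (i : ℕ) → Fin (nd i) → ℝ) : Prop :=
  xb 0 = xbarInit ∧
  (∀ i ≤ p, x i 0 = xb i) ∧
  (∀ i ≤ p, ∀ t < Ni i,
    x i (t + 1) = A i t *ᵥ x i t + B i t *ᵥ u i t + a i t) ∧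
  (∀ i < p, x i (Ni i) = Ac i *ᵥ xb i + Tc i *ᵥ db i + ac i) ∧
  (∀ i < p, xb (i + 1) = Ac i *ᵥ xb i + Tc i *ᵥ db i + ac i)

/-- Objective of the extended split MPC problem. -/
noncomputable def SplitCost (x : ℕ → ℕ → Fin nx → ℝ) (u : (i : ℕ) → ℕ → Fin (nu i) → ℝ) : ℝ :=
  (∑ i ∈ Finset.range (p + 1), ∑ t ∈ Finset.range (Ni i),
    (((1 : ℝ) / 2) * ((x i t) ⬝ᵥ (Hx i t *ᵥ x i t)
        + 2 * ((x i t) ⬝ᵥ (Hxu i t *ᵥ u i t))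
        + (u i t) ⬝ᵥ (Hu i t *ᵥ u i t))
      + fx i t ⬝ᵥ x i t + fu i t ⬝ᵥ u i t))
  + ((1 : ℝ) / 2) * ((x p (Ni p)) ⬝ᵥ (HNp *ᵥ x p (Ni p))) + fNp ⬝ᵥ (x p (Ni p))


theorem eq_zero_of_forall_nonneg_mul_add_sq {l s : ℝ} (h : ∀ ε : ℝ, 0 ≤ ε * l + ε ^ 2 * s) :
    l = 0 := by
  have hmin : IsLocalMin (fun ε : ℝ => ε * l + ε ^ 2 * s) 0 :=
    Filter.Eventually.of_forall fun ε => by simpa using h ε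
  have hderiv : HasDerivAt (fun ε : ℝ => ε * l + ε ^ 2 * s) l 0 := by
    simpa using (hasDerivAt_mul_const l).fun_add ((hasDerivAt_pow 2 (0 : ℝ)).mul_const s)
  exact hmin.hasDerivAt_eq_zero hderiv

theorem LinearMap.exists_dual_comp_eq_of_isMinOn_fiber {V W : Type*} [AddCommGroup V]
    [Module ℝ V] [AddCommGroup W] [Module ℝ W] (C : V →ₗ[ℝ] W) (G : V →ₗ[ℝ] ℝ) (f : V → ℝ)
    (z : V) (hf : ∀ d, ∃ q : ℝ, ∀ ε : ℝ, f (z + ε • d) = f z + ε * G d + ε ^ 2 * q)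
    (hmin : IsMinOn f {z' | C z' = C z} z) :
    ∃ ψ : Module.Dual ℝ W, ∀ d, ψ (C d) = G d := by
  have hG : G ∈ (LinearMap.ker C).dualAnnihilator := by
    refine (Submodule.mem_dualAnnihilator G).2 fun d hd => ?_
    obtain ⟨q, hq⟩ := hf d
    refine eq_zero_of_forall_nonneg_mul_add_sq (s := q) fun ε => ?_
    have := isMinOn_iff.1 hmin (z + ε • d) (by simp [LinearMap.mem_ker.1 hd])
    linarith [hq ε]
  rw [← LinearMap.range_dualMap_eq_dualAnnihilator_ker] at hG
  obtain ⟨ψ, hψ⟩ := hG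
  exact ⟨ψ, fun d => LinearMap.congr_fun hψ d⟩

theorem dotProductEquiv_symm_dotProduct {R n : Type*} [CommSemiring R] [Fintype n]
    [DecidableEq n] (φ : Module.Dual R (n → R)) (v : n → R) :
    (dotProductEquiv R n).symm φ ⬝ᵥ v = φ v := by
  rw [← dotProductEquiv_apply_apply, LinearEquiv.apply_symm_apply]

theorem transpose_mulVec_dotProduct {R m n : Type*} [CommSemiring R] [Fintype m] [Fintype n]
    (M : Matrix m n R) (y : m → R) (v : n → R) : (Mᵀ *ᵥ y) ⬝ᵥ v = y ⬝ᵥ (M *ᵥ v) := by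
  rw [dotProduct_comm, dotProduct_transpose_mulVec]

theorem dotProduct_mulVec_add_smul {R m n : Type*} [CommRing R] [Fintype m] [Fintype n]
    (M : Matrix m n R) (x d : m → R) (y e : n → R) (ε : R) :
    (x + ε • d) ⬝ᵥ (M *ᵥ (y + ε • e))
      = x ⬝ᵥ (M *ᵥ y) + ε * (d ⬝ᵥ (M *ᵥ y) + x ⬝ᵥ (M *ᵥ e)) + ε ^ 2 * (d ⬝ᵥ (M *ᵥ e)) := by
  simp only [mulVec_add, mulVec_smul, dotProduct_add, add_dotProduct, dotProduct_smul,
    smul_dotProduct, smul_eq_mul]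
  ring

noncomputable def terminalCost {n : Type*} [Fintype n] (Q : Matrix n n ℝ) (q x : n → ℝ) : ℝ :=
  (1 : ℝ) / 2 * (x ⬝ᵥ (Q *ᵥ x)) + q ⬝ᵥ x

theorem terminalCost_add_smul {n : Type*} [Fintype n] {Q : Matrix n n ℝ} (hQ : Qᵀ = Q)
    (q x d : n → ℝ) (ε : ℝ) :
    terminalCost Q q (x + ε • d)
      = terminalCost Q q x + ε * ((Q *ᵥ x + q) ⬝ᵥ d) + ε ^ 2 * terminalCost Q 0 d := by
  have hsymm : x ⬝ᵥ (Q *ᵥ d) = (Q *ᵥ x) ⬝ᵥ d := by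
    rw [← hQ, dotProduct_transpose_mulVec, hQ, dotProduct_comm]
  rw [terminalCost, terminalCost, terminalCost, dotProduct_mulVec_add_smul, hsymm,
    dotProduct_comm d, dotProduct_add, dotProduct_smul, add_dotProduct, zero_dotProduct,
    smul_eq_mul]
  ring

noncomputable def stageCost {m n : Type*} [Fintype m] [Fintype n] (Q : Matrix n n ℝ)
    (S : Matrix n m ℝ) (R : Matrix m m ℝ) (q : n → ℝ) (r : m → ℝ) (x : n → ℝ) (u : m → ℝ) : ℝ :=
  ((1 : ℝ) / 2) * (x ⬝ᵥ (Q *ᵥ x) + 2 * (x ⬝ᵥ (S *ᵥ u)) + u ⬝ᵥ (R *ᵥ u)) + q ⬝ᵥ x + r ⬝ᵥ u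

theorem stageCost_add_smul {m n : Type*} [Fintype m] [Fintype n] {Q : Matrix n n ℝ}
    (S : Matrix n m ℝ) {R : Matrix m m ℝ} (hQ : Qᵀ = Q) (hR : Rᵀ = R) (q : n → ℝ) (r : m → ℝ)
    (x dx : n → ℝ) (u du : m → ℝ) (ε : ℝ) :
    stageCost Q S R q r (x + ε • dx) (u + ε • du)
      = stageCost Q S R q r x u
        + ε * ((Q *ᵥ x + S *ᵥ u + q) ⬝ᵥ dx + (Sᵀ *ᵥ x + R *ᵥ u + r) ⬝ᵥ du)
        + ε ^ 2 * stageCost Q S R 0 0 dx du := by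
  have hQsymm : x ⬝ᵥ (Q *ᵥ dx) = (Q *ᵥ x) ⬝ᵥ dx := by
    rw [← hQ, dotProduct_transpose_mulVec, hQ, dotProduct_comm]
  have hRsymm : u ⬝ᵥ (R *ᵥ du) = (R *ᵥ u) ⬝ᵥ du := by
    rw [← hR, dotProduct_transpose_mulVec, hR, dotProduct_comm]
  have hS : x ⬝ᵥ (S *ᵥ du) = (Sᵀ *ᵥ x) ⬝ᵥ du := by
    rw [dotProduct_mulVec, mulVec_transpose]
  simp only [stageCost, dotProduct_mulVec_add_smul _ x dx, dotProduct_mulVec_add_smul _ u du,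
    hQsymm, hRsymm, hS, dotProduct_add, dotProduct_smul, add_dotProduct, zero_dotProduct,
    smul_eq_mul, dotProduct_comm dx, dotProduct_comm du]
  ring

theorem sum_sum_dotProduct_single {ι κ : Type*} [DecidableEq ι] [DecidableEq κ]
    {n : ι → Type*} [∀ i, Fintype (n i)] (s : Finset ι) (T : ι → Finset κ)
    (g : (i : ι) → κ → n i → ℝ) (i : ι) (t : κ) (w : n i → ℝ) :
    ∑ i' ∈ s, ∑ t' ∈ T i', g i' t' ⬝ᵥ (Pi.single i (Pi.single t w) : (i : ι) → κ → n i → ℝ) i' t'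
      = if i ∈ s ∧ t ∈ T i then g i t ⬝ᵥ w else 0 := by
  have hoff : ∀ i' ≠ i, ∀ t', (Pi.single i (Pi.single t w) : (i : ι) → κ → n i → ℝ) i' t' = 0 :=
    fun i' hi' t' => by simp [Pi.single_eq_of_ne hi']
  by_cases hi : i ∈ s
  · rw [sum_eq_single_of_mem i hi fun i' _ hi' => sum_eq_zero fun t' _ => by simp [hoff i' hi']]
    simp only [Pi.single_eq_same, Pi.single_apply, apply_ite (dotProduct _), dotProduct_zero,
      sum_ite_eq', hi, true_and]
  · rw [if_neg (by tauto)]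
    exact sum_eq_zero fun i' hi' => sum_eq_zero fun t' _ => by
      simp [hoff i' (ne_of_mem_of_not_mem hi' hi)]

abbrev SplitVar : Type :=
  (ℕ → ℕ → Fin nx → ℝ) × ((i : ℕ) → ℕ → Fin (nu i) → ℝ) × (ℕ → Fin nx → ℝ) ×
    ((i : ℕ) → Fin (nd i) → ℝ)

/-- Constraint rows, laid out like the multipliers of `split_mpc_dual_relations`: row `(i, t)` of
the first component is `x_{0,i} = x̄_i` for `t = 0` and the dynamics into `x_{t,i}` otherwise, the
second holds the terminal constraints, and in the third row `0` is `x̄_0 = x̄` while row `j + 1` is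
the coupling constraint into `x̄_{j+1}`. Rows outside the horizon are zero. -/
abbrev SplitResidual : Type :=
  (ℕ → ℕ → Fin nx → ℝ) × (ℕ → Fin nx → ℝ) × (ℕ → Fin nx → ℝ)

def predictedState (z : SplitVar nx nu nd) (i : ℕ) : ℕ → Fin nx → ℝ
  | 0 => z.2.2.1 i
  | t + 1 => A i t *ᵥ z.1 i t + B i t *ᵥ z.2.1 i t

def predictedNode (z : SplitVar nx nu nd) : ℕ → Fin nx → ℝ
  | 0 => 0
  | i + 1 => Ac i *ᵥ z.2.2.1 i + Tc i *ᵥ z.2.2.2 i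

def splitConstraint : SplitVar nx nu nd →ₗ[ℝ] SplitResidual nx where
  toFun z :=
    (fun i t => if i ≤ p ∧ t ≤ Ni i then z.1 i t - predictedState nx nu nd A B z i t else 0,
     fun i => if i < p then z.1 i (Ni i) - predictedNode nx nu nd Ac Tc z (i + 1) else 0,
     fun j => if j ≤ p then z.2.2.1 j - predictedNode nx nu nd Ac Tc z j else 0)
  map_add' z w := by
    ext i t : 3 <;> (try cases t) <;> (try cases i) <;>
      simp only [predictedState, predictedNode, Prod.fst_add, Prod.snd_add, Pi.add_apply,
        mulVec_add] <;> (try split_ifs) <;> abel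
  map_smul' c z := by
    ext i t : 3 <;> (try cases t) <;> (try cases i) <;>
      simp only [predictedState, predictedNode, Prod.smul_fst, Prod.smul_snd, Pi.smul_apply,
        mulVec_smul, RingHom.id_apply] <;> (try split_ifs) <;>
      simp only [smul_sub, smul_add, smul_zero]

def splitCostGrad (x : ℕ → ℕ → Fin nx → ℝ) (u : (i : ℕ) → ℕ → Fin (nu i) → ℝ) :
    SplitVar nx nu nd →ₗ[ℝ] ℝ where
  toFun d :=
    (∑ i ∈ range (p + 1), ∑ t ∈ range (Ni i),
      ((Hx i t *ᵥ x i t + Hxu i t *ᵥ u i t + fx i t) ⬝ᵥ d.1 i t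
        + ((Hxu i t)ᵀ *ᵥ x i t + Hu i t *ᵥ u i t + fu i t) ⬝ᵥ d.2.1 i t))
    + (HNp *ᵥ x p (Ni p) + fNp) ⬝ᵥ d.1 p (Ni p)
  map_add' d e := by
    simp only [Prod.fst_add, Prod.snd_add, Pi.add_apply, dotProduct_add, sum_add_distrib]
    ring
  map_smul' c d := by
    simp only [Prod.smul_fst, Prod.smul_snd, Pi.smul_apply, dotProduct_smul, smul_eq_mul,
      RingHom.id_apply, ← mul_add, ← mul_sum]

noncomputable def stateMultiplier (ψ : Module.Dual ℝ (SplitResidual nx)) (i t : ℕ) :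
    Fin nx → ℝ :=
  (dotProductEquiv ℝ (Fin nx)).symm
    (ψ ∘ₗ LinearMap.inl ℝ _ _ ∘ₗ LinearMap.single ℝ (fun _ : ℕ => ℕ → Fin nx → ℝ) i
      ∘ₗ LinearMap.single ℝ (fun _ : ℕ => Fin nx → ℝ) t)

noncomputable def terminalMultiplier (ψ : Module.Dual ℝ (SplitResidual nx)) (i : ℕ) :
    Fin nx → ℝ :=
  (dotProductEquiv ℝ (Fin nx)).symm
    (ψ ∘ₗ LinearMap.inr ℝ _ _ ∘ₗ LinearMap.inl ℝ _ _
      ∘ₗ LinearMap.single ℝ (fun _ : ℕ => Fin nx → ℝ) i)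

noncomputable def nodeMultiplier (ψ : Module.Dual ℝ (SplitResidual nx)) (j : ℕ) :
    Fin nx → ℝ :=
  (dotProductEquiv ℝ (Fin nx)).symm
    (ψ ∘ₗ LinearMap.inr ℝ _ _ ∘ₗ LinearMap.inr ℝ _ _
      ∘ₗ LinearMap.single ℝ (fun _ : ℕ => Fin nx → ℝ) j)

def IsSplitMultiplier (x : ℕ → ℕ → Fin nx → ℝ) (u : (i : ℕ) → ℕ → Fin (nu i) → ℝ)
    (ψ : Module.Dual ℝ (SplitResidual nx)) : Prop :=
  ∀ d, ψ (splitConstraint p nx Ni nu nd A B Ac Tc d)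
    = splitCostGrad p nx Ni nu nd Hx Hxu Hu fx fu HNp fNp x u d

section

variable {p nx Ni nu nd Hx Hxu Hu fx fu A B a HNp fNp Ac Tc ac xbarInit}

theorem SplitFeasible.of_splitConstraint_eq {x x' : ℕ → ℕ → Fin nx → ℝ}
    {u u' : (i : ℕ) → ℕ → Fin (nu i) → ℝ} {xb xb' : ℕ → Fin nx → ℝ}
    {db db' : (i : ℕ) → Fin (nd i) → ℝ}
    (hz : SplitFeasible p nx Ni nu nd A B a Ac Tc ac xbarInit x u xb db)
    (h : splitConstraint p nx Ni nu nd A B Ac Tc (x', u', xb', db')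
      = splitConstraint p nx Ni nu nd A B Ac Tc (x, u, xb, db)) :
    SplitFeasible p nx Ni nu nd A B a Ac Tc ac xbarInit x' u' xb' db' := by
  obtain ⟨hx0, hinit, hdyn, hterm, hcoup⟩ := hz
  have hstate : ∀ i ≤ p, ∀ t ≤ Ni i,
      x' i t - predictedState nx nu nd A B (x', u', xb', db') i t
        = x i t - predictedState nx nu nd A B (x, u, xb, db) i t := fun i hi t ht => by
    simpa [splitConstraint, hi, ht] using congr_fun (congr_fun (congrArg Prod.fst h) i) t
  have hterm' : ∀ i < p,
      x' i (Ni i) - predictedNode nx nu nd Ac Tc (x', u', xb', db') (i + 1)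
        = x i (Ni i) - predictedNode nx nu nd Ac Tc (x, u, xb, db) (i + 1) := fun i hi => by
    simpa [splitConstraint, hi] using congr_fun (congrArg (·.2.1) h) i
  have hnode : ∀ j ≤ p,
      xb' j - predictedNode nx nu nd Ac Tc (x', u', xb', db') j
        = xb j - predictedNode nx nu nd Ac Tc (x, u, xb, db) j := fun j hj => by
    simpa [splitConstraint, hj] using congr_fun (congrArg (·.2.2) h) j
  refine ⟨?_, fun i hi => ?_, fun i hi t ht => ?_, fun i hi => ?_, fun i hi => ?_⟩
  · simpa [predictedNode, hx0] using hnode 0 (Nat.zero_le p)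
  · have := hstate i hi 0 (Nat.zero_le _)
    rwa [predictedState, predictedState, hinit i hi, sub_self, sub_eq_zero] at this
  · have := hstate i hi (t + 1) ht
    rw [predictedState, predictedState, hdyn i hi t ht, add_sub_cancel_left] at this
    exact sub_eq_iff_eq_add'.1 this
  · have := hterm' i hi
    rw [predictedNode, predictedNode, hterm i hi, add_sub_cancel_left] at this
    exact sub_eq_iff_eq_add'.1 this
  · have := hnode (i + 1) hi
    rw [predictedNode, predictedNode, hcoup i hi, add_sub_cancel_left] at this
    exact sub_eq_iff_eq_add'.1 this

theorem splitCost_eq_sum_stageCost (x : ℕ → ℕ → Fin nx → ℝ) (u : (i : ℕ) → ℕ → Fin (nu i) → ℝ) :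
    SplitCost p nx Ni nu Hx Hxu Hu fx fu HNp fNp x u
      = ∑ i ∈ range (p + 1), ∑ t ∈ range (Ni i),
          stageCost (Hx i t) (Hxu i t) (Hu i t) (fx i t) (fu i t) (x i t) (u i t)
        + terminalCost HNp fNp (x p (Ni p)) := by
  rw [SplitCost, add_assoc]
  rfl

theorem splitCost_add_smul
    (hHsym : ∀ i ≤ p, ∀ t < Ni i, (Hx i t)ᵀ = Hx i t ∧ (Hu i t)ᵀ = Hu i t)
    (hHN : HNpᵀ = HNp) (x : ℕ → ℕ → Fin nx → ℝ) (u : (i : ℕ) → ℕ → Fin (nu i) → ℝ)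
    (d : SplitVar nx nu nd) (ε : ℝ) :
    SplitCost p nx Ni nu Hx Hxu Hu fx fu HNp fNp (x + ε • d.1) (u + ε • d.2.1)
      = SplitCost p nx Ni nu Hx Hxu Hu fx fu HNp fNp x u
        + ε * splitCostGrad p nx Ni nu nd Hx Hxu Hu fx fu HNp fNp x u d
        + ε ^ 2 * SplitCost p nx Ni nu Hx Hxu Hu 0 0 HNp 0 d.1 d.2.1 := by
  simp only [splitCost_eq_sum_stageCost, Pi.add_apply, Pi.smul_apply, Pi.zero_apply]
  rw [sum_congr rfl fun i hi => sum_congr rfl fun t ht =>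
    stageCost_add_smul _ (hHsym i (by simpa [Nat.lt_succ_iff] using hi) t (mem_range.1 ht)).1
      (hHsym i (by simpa [Nat.lt_succ_iff] using hi) t (mem_range.1 ht)).2 _ _ _ _ _ _ ε,
    terminalCost_add_smul hHN]
  simp only [splitCostGrad, LinearMap.coe_mk, AddHom.coe_mk, mul_add, mul_sum, sum_add_distrib]
  ring

theorem splitCostGrad_single_state (x : ℕ → ℕ → Fin nx → ℝ)
    (u : (i : ℕ) → ℕ → Fin (nu i) → ℝ) (i t : ℕ) (v : Fin nx → ℝ) :
    splitCostGrad p nx Ni nu nd Hx Hxu Hu fx fu HNp fNp x u (Pi.single i (Pi.single t v), 0, 0, 0)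
      = (if i ≤ p ∧ t < Ni i then (Hx i t *ᵥ x i t + Hxu i t *ᵥ u i t + fx i t) ⬝ᵥ v else 0)
        + (if i = p ∧ t = Ni p then (HNp *ᵥ x p (Ni p) + fNp) ⬝ᵥ v else 0) := by
  simp only [splitCostGrad, LinearMap.coe_mk, AddHom.coe_mk, Pi.zero_apply, dotProduct_zero,
    add_zero, sum_sum_dotProduct_single, mem_range, Nat.lt_succ_iff]
  congr 1
  rcases eq_or_ne i p with rfl | hi
  · by_cases ht : t = Ni i <;> simp [ht, eq_comm]
  · simp [hi]

theorem splitCostGrad_single_control (x : ℕ → ℕ → Fin nx → ℝ)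
    (u : (i : ℕ) → ℕ → Fin (nu i) → ℝ) (i t : ℕ) (w : Fin (nu i) → ℝ) :
    splitCostGrad p nx Ni nu nd Hx Hxu Hu fx fu HNp fNp x u (0, Pi.single i (Pi.single t w), 0, 0)
      = if i ≤ p ∧ t < Ni i then ((Hxu i t)ᵀ *ᵥ x i t + Hu i t *ᵥ u i t + fu i t) ⬝ᵥ w else 0 := by
  simp only [splitCostGrad, LinearMap.coe_mk, AddHom.coe_mk, Pi.zero_apply, dotProduct_zero,
    zero_add, add_zero, sum_sum_dotProduct_single, mem_range, Nat.lt_succ_iff]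

theorem splitCostGrad_zero_zero (x : ℕ → ℕ → Fin nx → ℝ) (u : (i : ℕ) → ℕ → Fin (nu i) → ℝ)
    (ξ : ℕ → Fin nx → ℝ) (η : (i : ℕ) → Fin (nd i) → ℝ) :
    splitCostGrad p nx Ni nu nd Hx Hxu Hu fx fu HNp fNp x u (0, 0, ξ, η) = 0 := by
  simp only [splitCostGrad, LinearMap.coe_mk, AddHom.coe_mk, Pi.zero_apply, dotProduct_zero,
    add_zero, sum_const_zero]

theorem splitConstraint_single_state_of_lt {i t : ℕ} (hi : i ≤ p) (ht : t < Ni i)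
    (v : Fin nx → ℝ) :
    splitConstraint p nx Ni nu nd A B Ac Tc (Pi.single i (Pi.single t v), 0, 0, 0)
      = (Pi.single i (Pi.single t v), 0, 0)
        - (Pi.single i (Pi.single (t + 1) (A i t *ᵥ v)), 0, 0) := by
  ext i' t' : 3 <;> (try cases t') <;> (try cases i') <;>
    simp [splitConstraint, predictedState, predictedNode, Pi.single_apply, ite_apply] <;>
    (try split_ifs) <;> (try intros) <;> (try simp_all) <;> omega

theorem splitConstraint_single_state_last (v : Fin nx → ℝ) :
    splitConstraint p nx Ni nu nd A B Ac Tc (Pi.single p (Pi.single (Ni p) v), 0, 0, 0)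
      = (Pi.single p (Pi.single (Ni p) v), 0, 0) := by
  ext i' t' : 3 <;> (try cases t') <;> (try cases i') <;>
    simp [splitConstraint, predictedState, predictedNode, Pi.single_apply, ite_apply] <;>
    (try split_ifs) <;> (try intros) <;> (try simp_all) <;> omega

theorem splitConstraint_single_state_terminal {i : ℕ} (hi : i < p) (v : Fin nx → ℝ) :
    splitConstraint p nx Ni nu nd A B Ac Tc (Pi.single i (Pi.single (Ni i) v), 0, 0, 0)
      = (Pi.single i (Pi.single (Ni i) v), 0, 0) + (0, Pi.single i v, 0) := by
  ext i' t' : 3 <;> (try cases t') <;> (try cases i') <;>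
    simp [splitConstraint, predictedState, predictedNode, Pi.single_apply, ite_apply] <;>
    (try split_ifs) <;> (try intros) <;> (try simp_all) <;> omega

theorem splitConstraint_single_control {i t : ℕ} (hi : i ≤ p) (ht : t < Ni i)
    (w : Fin (nu i) → ℝ) :
    splitConstraint p nx Ni nu nd A B Ac Tc (0, Pi.single i (Pi.single t w), 0, 0)
      = -(Pi.single i (Pi.single (t + 1) (B i t *ᵥ w)), 0, 0) := by
  ext i' t' : 3
  · rcases eq_or_ne i' i with rfl | hi'
    · cases t' <;> simp [splitConstraint, predictedState, Pi.single_apply, hi]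
      split_ifs <;> simp_all
    · cases t' <;> simp [splitConstraint, predictedState, hi']
  · simp [splitConstraint, predictedNode]
  · cases i' <;> simp [splitConstraint, predictedNode]

theorem splitConstraint_single_node_last (v : Fin nx → ℝ) :
    splitConstraint p nx Ni nu nd A B Ac Tc (0, 0, Pi.single p v, 0)
      = (0, 0, Pi.single p v) - (Pi.single p (Pi.single 0 v), 0, 0) := by
  ext i' t' : 3 <;> (try cases t') <;> (try cases i') <;>
    simp [splitConstraint, predictedState, predictedNode, Pi.single_apply, ite_apply] <;>
    (try split_ifs) <;> (try intros) <;> (try simp_all) <;> omega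

theorem splitConstraint_single_node {i : ℕ} (hi : i < p) (v : Fin nx → ℝ) :
    splitConstraint p nx Ni nu nd A B Ac Tc (0, 0, Pi.single i v, 0)
      = (0, 0, Pi.single i v) - (Pi.single i (Pi.single 0 v), 0, 0)
        - (0, Pi.single i (Ac i *ᵥ v), 0) - (0, 0, Pi.single (i + 1) (Ac i *ᵥ v)) := by
  ext i' t' : 3 <;> (try cases t') <;> (try cases i') <;>
    simp [splitConstraint, predictedState, predictedNode, Pi.single_apply, ite_apply] <;>
    (try split_ifs) <;> (try intros) <;> (try simp_all) <;> omega

theorem splitConstraint_single_coupling {i : ℕ} (hi : i < p) (w : Fin (nd i) → ℝ) :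
    splitConstraint p nx Ni nu nd A B Ac Tc (0, 0, 0, Pi.single i w)
      = -(0, Pi.single i (Tc i *ᵥ w), 0) - (0, 0, Pi.single (i + 1) (Tc i *ᵥ w)) := by
  ext i' t' : 3
  · cases t' <;> simp [splitConstraint, predictedState]
  · rcases eq_or_ne i' i with rfl | hi'
    · simp [splitConstraint, predictedNode, hi]
    · simp [splitConstraint, predictedNode, hi']
  · rcases i' with _ | i'
    · simp [splitConstraint, predictedNode]
    · rcases eq_or_ne i' i with rfl | hi'
      · simp [splitConstraint, predictedNode, hi]
      · simp [splitConstraint, predictedNode, hi']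

theorem apply_single_state_row (ψ : Module.Dual ℝ (SplitResidual nx)) (i t : ℕ) (v : Fin nx → ℝ) :
    ψ (Pi.single i (Pi.single t v), 0, 0) = stateMultiplier nx ψ i t ⬝ᵥ v := by
  rw [stateMultiplier, dotProductEquiv_symm_dotProduct]
  rfl

theorem apply_single_terminal_row (ψ : Module.Dual ℝ (SplitResidual nx)) (i : ℕ) (v : Fin nx → ℝ) :
    ψ (0, Pi.single i v, 0) = terminalMultiplier nx ψ i ⬝ᵥ v := by
  rw [terminalMultiplier, dotProductEquiv_symm_dotProduct]
  rfl

theorem apply_single_node_row (ψ : Module.Dual ℝ (SplitResidual nx)) (j : ℕ) (v : Fin nx → ℝ) :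
    ψ (0, 0, Pi.single j v) = nodeMultiplier nx ψ j ⬝ᵥ v := by
  rw [nodeMultiplier, dotProductEquiv_symm_dotProduct]
  rfl

variable {x : ℕ → ℕ → Fin nx → ℝ} {u : (i : ℕ) → ℕ → Fin (nu i) → ℝ}
  {ψ : Module.Dual ℝ (SplitResidual nx)}

theorem IsSplitMultiplier.stage_state
    (hψ : IsSplitMultiplier p nx Ni nu nd Hx Hxu Hu fx fu A B HNp fNp Ac Tc x u ψ)
    {i t : ℕ} (hi : i ≤ p) (ht : t < Ni i) :
    Hx i t *ᵥ x i t + Hxu i t *ᵥ u i t + fx i t - stateMultiplier nx ψ i t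
      + (A i t)ᵀ *ᵥ stateMultiplier nx ψ i (t + 1) = 0 := by
  refine dotProduct_eq _ _ fun v => ?_
  have h := hψ (Pi.single i (Pi.single t v), 0, 0, 0)
  rw [splitConstraint_single_state_of_lt hi ht, map_sub, apply_single_state_row,
    apply_single_state_row, splitCostGrad_single_state, if_pos ⟨hi, ht⟩,
    if_neg (by rintro ⟨rfl, rfl⟩; exact lt_irrefl _ ht), add_zero] at h
  simp only [add_dotProduct, sub_dotProduct, zero_dotProduct, transpose_mulVec_dotProduct] at h ⊢
  linarith

theorem IsSplitMultiplier.stage_control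
    (hψ : IsSplitMultiplier p nx Ni nu nd Hx Hxu Hu fx fu A B HNp fNp Ac Tc x u ψ)
    {i t : ℕ} (hi : i ≤ p) (ht : t < Ni i) :
    (Hxu i t)ᵀ *ᵥ x i t + Hu i t *ᵥ u i t + fu i t
      + (B i t)ᵀ *ᵥ stateMultiplier nx ψ i (t + 1) = 0 := by
  refine dotProduct_eq _ _ fun w => ?_
  have h := hψ (0, Pi.single i (Pi.single t w), 0, 0)
  rw [splitConstraint_single_control hi ht, map_neg, apply_single_state_row,
    splitCostGrad_single_control, if_pos ⟨hi, ht⟩] at h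
  simp only [add_dotProduct, zero_dotProduct, transpose_mulVec_dotProduct] at h ⊢
  linarith

theorem IsSplitMultiplier.terminal_state
    (hψ : IsSplitMultiplier p nx Ni nu nd Hx Hxu Hu fx fu A B HNp fNp Ac Tc x u ψ) :
    HNp *ᵥ x p (Ni p) + fNp - stateMultiplier nx ψ p (Ni p) = 0 := by
  refine dotProduct_eq _ _ fun v => ?_
  have h := hψ (Pi.single p (Pi.single (Ni p) v), 0, 0, 0)
  rw [splitConstraint_single_state_last, apply_single_state_row, splitCostGrad_single_state,
    if_neg (by omega), if_pos ⟨rfl, rfl⟩, zero_add] at h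
  simp only [sub_dotProduct, zero_dotProduct]
  linarith

theorem IsSplitMultiplier.stateMultiplier_horizon
    (hψ : IsSplitMultiplier p nx Ni nu nd Hx Hxu Hu fx fu A B HNp fNp Ac Tc x u ψ)
    {i : ℕ} (hi : i < p) :
    stateMultiplier nx ψ i (Ni i) = -terminalMultiplier nx ψ i := by
  refine dotProduct_eq _ _ fun v => ?_
  have h := hψ (Pi.single i (Pi.single (Ni i) v), 0, 0, 0)
  rw [splitConstraint_single_state_terminal hi, map_add, apply_single_state_row,
    apply_single_terminal_row, splitCostGrad_single_state, if_neg (by omega),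
    if_neg (by omega), add_zero] at h
  simp only [neg_dotProduct]
  linarith

theorem IsSplitMultiplier.stateMultiplier_zero_last
    (hψ : IsSplitMultiplier p nx Ni nu nd Hx Hxu Hu fx fu A B HNp fNp Ac Tc x u ψ) :
    stateMultiplier nx ψ p 0 = nodeMultiplier nx ψ p := by
  refine dotProduct_eq _ _ fun v => ?_
  have h := hψ (0, 0, Pi.single p v, 0)
  rw [splitConstraint_single_node_last, map_sub, apply_single_node_row, apply_single_state_row] at h
  rw [splitCostGrad_zero_zero] at h
  linarith

theorem IsSplitMultiplier.stateMultiplier_zero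
    (hψ : IsSplitMultiplier p nx Ni nu nd Hx Hxu Hu fx fu A B HNp fNp Ac Tc x u ψ)
    {i : ℕ} (hi : i < p) :
    stateMultiplier nx ψ i 0 = nodeMultiplier nx ψ i
      - (Ac i)ᵀ *ᵥ (terminalMultiplier nx ψ i + nodeMultiplier nx ψ (i + 1)) := by
  refine dotProduct_eq _ _ fun v => ?_
  have h := hψ (0, 0, Pi.single i v, 0)
  rw [splitConstraint_single_node hi, map_sub, map_sub, map_sub, apply_single_node_row,
    apply_single_state_row, apply_single_terminal_row, apply_single_node_row] at h
  rw [splitCostGrad_zero_zero] at h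
  simp only [sub_dotProduct, transpose_mulVec_dotProduct, add_dotProduct]
  linarith

theorem IsSplitMultiplier.coupling
    (hψ : IsSplitMultiplier p nx Ni nu nd Hx Hxu Hu fx fu A B HNp fNp Ac Tc x u ψ)
    {i : ℕ} (hi : i < p) :
    (Tc i)ᵀ *ᵥ (terminalMultiplier nx ψ i + nodeMultiplier nx ψ (i + 1)) = 0 := by
  refine dotProduct_eq _ _ fun w => ?_
  have h := hψ (0, 0, 0, Pi.single i w)
  rw [splitConstraint_single_coupling hi, map_sub, map_neg, apply_single_terminal_row,
    apply_single_node_row] at h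
  rw [splitCostGrad_zero_zero] at h
  simp only [transpose_mulVec_dotProduct, add_dotProduct, zero_dotProduct]
  linarith

end

/-- `lamhat (i + 1)` is `λ̂_i` and `lamhat 0` is `λ̂_{-1}`. -/
theorem split_mpc_dual_relations
    (hHsym : ∀ i ≤ p, ∀ t < Ni i, (Hx i t)ᵀ = Hx i t ∧ (Hu i t)ᵀ = Hu i t)
    (hHN : HNp.PosSemidef)
    (x : ℕ → ℕ → Fin nx → ℝ) (u : (i : ℕ) → ℕ → Fin (nu i) → ℝ)
    (xb : ℕ → Fin nx → ℝ) (db : (i : ℕ) → Fin (nd i) → ℝ)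
    (hfeas : SplitFeasible p nx Ni nu nd A B a Ac Tc ac xbarInit x u xb db)
    (hopt : ∀ (x' : ℕ → ℕ → Fin nx → ℝ) (u' : (i : ℕ) → ℕ → Fin (nu i) → ℝ)
      (xb' : ℕ → Fin nx → ℝ) (db' : (i : ℕ) → Fin (nd i) → ℝ),
      SplitFeasible p nx Ni nu nd A B a Ac Tc ac xbarInit x' u' xb' db' →
      SplitCost p nx Ni nu Hx Hxu Hu fx fu HNp fNp x u
        ≤ SplitCost p nx Ni nu Hx Hxu Hu fx fu HNp fNp x' u') :
    ∃ (lam : ℕ → ℕ → Fin nx → ℝ) (lamtc : ℕ → Fin nx → ℝ)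
      (lamhat : ℕ → Fin nx → ℝ),
      (∀ i ≤ p, ∀ t < Ni i,
        Hx i t *ᵥ x i t + Hxu i t *ᵥ u i t + fx i t
          - lam i t + (A i t)ᵀ *ᵥ lam i (t + 1) = 0) ∧
      (∀ i ≤ p, ∀ t < Ni i,
        (Hxu i t)ᵀ *ᵥ x i t + Hu i t *ᵥ u i t + fu i t
          + (B i t)ᵀ *ᵥ lam i (t + 1) = 0) ∧
      (HNp *ᵥ x p (Ni p) + fNp - lam p (Ni p) = 0) ∧
      (lam p 0 = lamhat p) ∧
      (∀ i < p, lam i 0 = lamhat i - (Ac i)ᵀ *ᵥ (lamtc i + lamhat (i + 1))) ∧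
      (∀ i < p, (Tc i)ᵀ *ᵥ (lamtc i + lamhat (i + 1)) = 0) ∧
      (∀ i < p, lam i (Ni i) = -(lamtc i)) := by
  have hHNsymm : HNpᵀ = HNp := by simpa using hHN.isHermitian.eq
  obtain ⟨ψ, hψ⟩ : ∃ ψ, IsSplitMultiplier p nx Ni nu nd Hx Hxu Hu fx fu A B HNp fNp Ac Tc x u ψ :=
    (splitConstraint p nx Ni nu nd A B Ac Tc).exists_dual_comp_eq_of_isMinOn_fiber
    (splitCostGrad p nx Ni nu nd Hx Hxu Hu fx fu HNp fNp x u)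
    (fun z => SplitCost p nx Ni nu Hx Hxu Hu fx fu HNp fNp z.1 z.2.1) (x, u, xb, db)
    (fun d => ⟨_, splitCost_add_smul hHsym hHNsymm x u d⟩)
    (isMinOn_iff.2 fun z' hz' => hopt _ _ _ _ (hfeas.of_splitConstraint_eq hz'))
  exact ⟨stateMultiplier nx ψ, terminalMultiplier nx ψ, nodeMultiplier nx ψ,
    fun i hi t ht => hψ.stage_state hi ht, fun i hi t ht => hψ.stage_control hi ht,
    hψ.terminal_state, hψ.stateMultiplier_zero_last, fun i hi => hψ.stateMultiplier_zero hi,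
    fun i hi => hψ.coupling hi, fun i hi => hψ.stateMultiplier_horizon hi⟩

end SplitMPC
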